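/- There exists a constant c > 0 such that for all probability measures μ, ν on ℝᵈ, c‖μ-ν‖_{var} ≤ ‖μ-ν‖_{δ,k*}, where ‖·‖_{var} is the total variation norm. -/

import Mathlib

open MeasureTheory ENNReal

noncomputable def tildeNorm (d : ℕ) (k : ℝ≥0∞) {F : Type*} [NormedAddCommGroup F]
    (f : EuclideanSpace ℝ (Fin d) → F) : ℝ≥0∞ :=
  ⨆ z : EuclideanSpace ℝ (Fin d),
    eLpNorm ((Metric.closedBall z 1).indicator f) k volume

/-- The heat semigroup `P_t⁰ f(x) = (2πt)^{-d/2} ∫ e^{-|x-y|²/(2t)} f(y) dy` on `ℝᵈ`. -/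
noncomputable def heatSem (d : ℕ) {F : Type*} [NormedAddCommGroup F] [NormedSpace ℝ F]
    (t : ℝ) (f : EuclideanSpace ℝ (Fin d) → F) (x : EuclideanSpace ℝ (Fin d)) : F :=
  (2 * Real.pi * t) ^ (-(d : ℝ) / 2) •
    ∫ y, Real.exp (-‖x - y‖ ^ 2 / (2 * t)) • f y

/-- `(1-Δ)^{-δ/2}` via the subordination formula (identity for `δ = 0`). -/
noncomputable def bessel (d : ℕ) {F : Type*} [NormedAddCommGroup F] [NormedSpace ℝ F]
    (δ : ℝ) (f : EuclideanSpace ℝ (Fin d) → F) : EuclideanSpace ℝ (Fin d) → F :=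
  if δ = 0 then f else fun x =>
    (Real.Gamma (δ / 2))⁻¹ •
      ∫ t in Set.Ioi (0:ℝ), (t ^ (δ / 2 - 1) * Real.exp (-t)) • heatSem d t f x

/-- The local negative Sobolev norm `‖f‖_{W̃^{-δ,k}}`. -/
noncomputable def tildeSobNorm (d : ℕ) (δ : ℝ) (k : ℝ≥0∞) {F : Type*}
    [NormedAddCommGroup F] [NormedSpace ℝ F]
    (f : EuclideanSpace ℝ (Fin d) → F) : ℝ≥0∞ :=
  tildeNorm d k (bessel d δ f)

/-- `‖μ‖_{δ,k*}`, the dual norm of a measure against the `W̃^{-δ,k}` unit ball of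
bounded measurable functions. -/
noncomputable def dualNorm (d : ℕ) (δ : ℝ) (k : ℝ≥0∞)
    (μ : Measure (EuclideanSpace ℝ (Fin d))) : ℝ≥0∞ :=
  ⨆ (f : EuclideanSpace ℝ (Fin d) → ℝ) (_ : Measurable f) (_ : ∃ M, ∀ x, |f x| ≤ M)
    (_ : tildeSobNorm d δ k f ≤ 1), ENNReal.ofReal |∫ x, f x ∂μ|

/-- `‖μ-ν‖_{δ,k*}`. -/
noncomputable def dualDist (d : ℕ) (δ : ℝ) (k : ℝ≥0∞)
    (μ ν : Measure (EuclideanSpace ℝ (Fin d))) : ℝ≥0∞ :=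
  ⨆ (f : EuclideanSpace ℝ (Fin d) → ℝ) (_ : Measurable f) (_ : ∃ M, ∀ x, |f x| ≤ M)
    (_ : tildeSobNorm d δ k f ≤ 1), ENNReal.ofReal |∫ x, f x ∂μ - ∫ x, f x ∂ν|

/-!
The Bessel potential `(1-Δ)^{-δ/2}` averages `f` against the heat kernels, which are
probability densities, with the probability weights `t^{δ/2-1} e^{-t} / Γ(δ/2) dt`; hence
it does not increase the sup norm. The local `Lᵏ` norm over unit balls is then at most
`|B(0,1)|^{1/k}` times the sup norm. So `c · 1_A`, with `c = |B(0,1)|^{-1/k}`, is an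
admissible test function for every measurable `A`, and testing `μ - ν` against it gives
`c |μ(A) - ν(A)| ≤ ‖μ-ν‖_{δ,k*}`.
-/

section

open Real

variable {d : ℕ} {F : Type*} [NormedAddCommGroup F]

local notation "E" => EuclideanSpace ℝ (Fin d)

lemma integral_exp_neg_norm_sub_sq_div {t : ℝ} (ht : 0 < t) (x : E) :
    ∫ y : E, exp (-‖x - y‖ ^ 2 / (2 * t)) = (2 * π * t) ^ ((d : ℝ) / 2) := by
  have hb : 0 < (2 * t)⁻¹ := by positivity
  have hexp : ∀ v : E, exp (-‖v‖ ^ 2 / (2 * t)) = exp (-(2 * t)⁻¹ * ‖v‖ ^ 2) := fun v ↦ by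
    congr 1
    ring
  rw [integral_sub_left_eq_self (fun v : E ↦ exp (-‖v‖ ^ 2 / (2 * t))) volume x]
  simp_rw [hexp]
  rw [GaussianFourier.integral_rexp_neg_mul_sq_norm hb, finrank_euclideanSpace,
    Fintype.card_fin, div_inv_eq_mul]
  congr 1
  ring

lemma integrable_exp_neg_norm_sub_sq_div {t : ℝ} (ht : 0 < t) (x : E) :
    Integrable fun y : E ↦ exp (-‖x - y‖ ^ 2 / (2 * t)) := by
  refine Integrable.of_integral_ne_zero ?_
  rw [integral_exp_neg_norm_sub_sq_div ht]
  positivity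

lemma norm_heatSem_le [NormedSpace ℝ F] {f : E → F} {c : ℝ} (hf : ∀ y, ‖f y‖ ≤ c)
    {t : ℝ} (ht : 0 < t) (x : E) : ‖heatSem d t f x‖ ≤ c := by
  have hZ : 0 < (2 * π * t) ^ ((d : ℝ) / 2) := by positivity
  have hI : ‖∫ y, exp (-‖x - y‖ ^ 2 / (2 * t)) • f y‖ ≤ (2 * π * t) ^ ((d : ℝ) / 2) * c := by
    rw [← integral_exp_neg_norm_sub_sq_div ht x, ← integral_mul_const]
    refine norm_integral_le_of_norm_le ((integrable_exp_neg_norm_sub_sq_div ht x).mul_const c)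
      (.of_forall fun y ↦ ?_)
    rw [norm_smul, norm_of_nonneg (exp_pos _).le]
    exact mul_le_mul_of_nonneg_left (hf y) (exp_pos _).le
  rw [heatSem, norm_smul, norm_of_nonneg (by positivity), neg_div,
    rpow_neg (by positivity), inv_mul_le_iff₀ hZ]
  exact hI

lemma norm_bessel_le [NormedSpace ℝ F] {δ : ℝ} (hδ : 0 ≤ δ) {f : E → F} {c : ℝ}
    (hf : ∀ y, ‖f y‖ ≤ c) (x : E) : ‖bessel d δ f x‖ ≤ c := by
  rcases hδ.eq_or_lt with rfl | hδ
  · simpa [bessel] using hf x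
  have hs : 0 < δ / 2 := by positivity
  have hΓ : 0 < Gamma (δ / 2) := Gamma_pos_of_pos hs
  have hweight : ∀ t ∈ Set.Ioi (0 : ℝ), 0 ≤ t ^ (δ / 2 - 1) * exp (-t) := fun t ht ↦
    mul_nonneg (rpow_nonneg (le_of_lt ht) _) (exp_pos _).le
  have hJ : ‖∫ t in Set.Ioi (0 : ℝ), (t ^ (δ / 2 - 1) * exp (-t)) • heatSem d t f x‖
      ≤ Gamma (δ / 2) * c := by
    rw [Gamma_eq_integral hs, ← integral_mul_const]
    refine norm_integral_le_of_norm_le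
      (IntegrableOn.congr_fun ((GammaIntegral_convergent hs).mul_const c)
        (fun t _ ↦ by ring) measurableSet_Ioi) ?_
    filter_upwards [ae_restrict_mem measurableSet_Ioi] with t ht
    rw [norm_smul, norm_of_nonneg (hweight t ht), mul_comm (exp _)]
    exact mul_le_mul_of_nonneg_left (norm_heatSem_le hf ht x) (hweight t ht)
  rw [bessel, if_neg hδ.ne', norm_smul, norm_inv, norm_of_nonneg hΓ.le, inv_mul_le_iff₀ hΓ]
  exact hJ

lemma tildeNorm_le_of_norm_le (k : ℝ≥0∞) {g : E → F} {c : ℝ} (hg : ∀ x, ‖g x‖ ≤ c) :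
    tildeNorm d k g ≤
      volume (Metric.closedBall (0 : E) 1) ^ k.toReal⁻¹ * ENNReal.ofReal c := by
  refine iSup_le fun z ↦ ?_
  rw [eLpNorm_indicator_eq_eLpNorm_restrict measurableSet_closedBall]
  refine (eLpNorm_le_of_ae_bound (.of_forall hg)).trans_eq ?_
  rw [Measure.restrict_apply_univ, Measure.addHaar_closedBall_center]

lemma tildeSobNorm_le_of_norm_le [NormedSpace ℝ F] {δ : ℝ} (hδ : 0 ≤ δ) (k : ℝ≥0∞)
    {f : E → F} {c : ℝ} (hf : ∀ x, ‖f x‖ ≤ c) :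
    tildeSobNorm d δ k f ≤
      volume (Metric.closedBall (0 : E) 1) ^ k.toReal⁻¹ * ENNReal.ofReal c :=
  tildeNorm_le_of_norm_le k (norm_bessel_le hδ hf)

lemma ofReal_abs_integral_sub_le_dualDist {δ : ℝ} {k : ℝ≥0∞} (μ ν : Measure E) {f : E → ℝ}
    (hf : Measurable f) (hbdd : ∃ M, ∀ x, |f x| ≤ M) (hsob : tildeSobNorm d δ k f ≤ 1) :
    ENNReal.ofReal |∫ x, f x ∂μ - ∫ x, f x ∂ν| ≤ dualDist d δ k μ ν :=
  le_iSup_of_le f <| le_iSup_of_le hf <| le_iSup_of_le hbdd <| le_iSup_of_le hsob le_rfl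

lemma ofReal_mul_abs_sub_le_dualDist {δ : ℝ} (hδ : 0 ≤ δ) {k : ℝ≥0∞} {c : ℝ} (hc : 0 ≤ c)
    (hck : volume (Metric.closedBall (0 : E) 1) ^ k.toReal⁻¹ * ENNReal.ofReal c ≤ 1)
    (μ ν : Measure E) {A : Set E} (hA : MeasurableSet A) :
    ENNReal.ofReal c * ENNReal.ofReal |(μ A).toReal - (ν A).toReal| ≤ dualDist d δ k μ ν := by
  have hbdd : ∀ x, |A.indicator (fun _ ↦ c) x| ≤ c := fun x ↦ by
    by_cases hx : x ∈ A <;> simp [hx, abs_of_nonneg hc, hc]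
  have hsob := tildeSobNorm_le_of_norm_le hδ k (f := A.indicator fun _ ↦ c) hbdd
  refine (Eq.le ?_).trans (ofReal_abs_integral_sub_le_dualDist μ ν
    (measurable_const.indicator hA) ⟨c, hbdd⟩ (hsob.trans hck))
  rw [integral_indicator_const _ hA, integral_indicator_const _ hA, smul_eq_mul, smul_eq_mul,
    ← sub_mul, abs_mul, abs_of_nonneg hc, ← ENNReal.ofReal_mul hc, mul_comm]
  rfl

end

theorem stmt7_general (d : ℕ) (δ : ℝ) (hδ : 0 ≤ δ) (k : ℝ≥0∞) :
    ∃ c : ℝ, 0 < c ∧ ∀ μ ν : Measure (EuclideanSpace ℝ (Fin d)),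
      IsProbabilityMeasure μ → IsProbabilityMeasure ν →
      ENNReal.ofReal c *
        (⨆ (A : Set (EuclideanSpace ℝ (Fin d))) (_ : MeasurableSet A),
          ENNReal.ofReal |(μ A).toReal - (ν A).toReal|) ≤
        dualDist d δ k μ ν := by
  set C := volume (Metric.closedBall (0 : EuclideanSpace ℝ (Fin d)) 1) ^ k.toReal⁻¹
  have hC0 : C ≠ 0 := (ENNReal.rpow_pos (Metric.measure_closedBall_pos _ _ one_pos)
    measure_closedBall_lt_top.ne).ne'
  have hCtop : C ≠ ⊤ := ENNReal.rpow_ne_top_of_nonneg (by positivity)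
    measure_closedBall_lt_top.ne
  have hCpos : 0 < C.toReal := ENNReal.toReal_pos hC0 hCtop
  refine ⟨C.toReal⁻¹, inv_pos.2 hCpos, fun μ ν _ _ ↦ ?_⟩
  have hck : C * ENNReal.ofReal C.toReal⁻¹ ≤ 1 := by
    rw [ENNReal.ofReal_inv_of_pos hCpos, ENNReal.ofReal_toReal hCtop,
      ENNReal.mul_inv_cancel hC0 hCtop]
  simp_rw [ENNReal.mul_iSup]
  exact iSup₂_le fun A hA ↦ ofReal_mul_abs_sub_le_dualDist hδ (inv_pos.2 hCpos).le hck μ ν hA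

/-- There is `c > 0` with `c ‖μ-ν‖_var ≤ ‖μ-ν‖_{δ,k*}` for all probability measures. -/
theorem stmt7 (d : ℕ) (δ : ℝ) (hδ : 0 ≤ δ) (k : ℝ≥0∞) (hk : 1 ≤ k) :
    ∃ c : ℝ, 0 < c ∧ ∀ μ ν : Measure (EuclideanSpace ℝ (Fin d)),
      IsProbabilityMeasure μ → IsProbabilityMeasure ν →
      ENNReal.ofReal c *
        (⨆ (A : Set (EuclideanSpace ℝ (Fin d))) (_ : MeasurableSet A),
          ENNReal.ofReal |(μ A).toReal - (ν A).toReal|) ≤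
        dualDist d δ k μ ν :=
  stmt7_general d δ hδ k
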